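/- arXiv:math/0508042 — 4 statements merged into one kernel-verified Lean document; each statement's English description precedes it below -/
import Mathlib

section
/- Let N₁(n) denote the number of ones and N₀(n) the number of zeros in the binary expansion of the positive integer n. Then Euler's constant γ satisfies γ = Σ_{n=1}^∞ (N₁(n) + N₀(n)) / (2n(2n+1)). -/
/-!
The number of binary digits of `n ≥ 1` is `⌊log₂ n⌋ + 1`, and `1 / (2n(2n+1)) = b (n-1) - b n` for
`b m = H (2m+1) - H m`. Summation by parts over the dyadic blocks `[2^k, 2^(k+1))` turns the partial
sum up to `2^K - 1` into `(K+1) E (2^K - 1) - K E (2^(K+1) - 1)`, where `E m = H m - log (m+1)` is the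
sequence defining `γ` (the `K (K+1) log 2` terms cancel). As `0 ≤ γ - E m ≤ 1 / (m+1)`, this tends
to `γ`; the partial sums of the nonnegative series are monotone, so the whole series sums to `γ`.
-/

open Real Finset Filter Topology

/-- Number of ones in the binary expansion of `n`. -/
def N1 (n : ℕ) : ℕ := (Nat.digits 2 n).count 1

/-- Number of zeros in the binary expansion of `n`. -/
def N0 (n : ℕ) : ℕ := (Nat.digits 2 n).count 0

theorem List.count_one_add_count_zero {l : List ℕ} (hl : ∀ x ∈ l, x < 2) :
    l.count 1 + l.count 0 = l.length := by
  induction l with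
  | nil => rfl
  | cons a l ih =>
    have ha : a < 2 := hl a List.mem_cons_self
    have hl' := ih fun x hx => hl x (List.mem_cons_of_mem a hx)
    interval_cases a <;>
      simp only [count_cons_self, ne_eq, zero_ne_one, one_ne_zero, not_false_eq_true,
        count_cons_of_ne, length_cons] <;> omega

theorem N1_add_N0 {n : ℕ} (hn : n ≠ 0) : N1 n + N0 n = Nat.log 2 n + 1 := by
  rw [N1, N0, List.count_one_add_count_zero fun _ => Nat.digits_lt_base one_lt_two,
    Nat.length_digits 2 n one_lt_two hn]

theorem Nat.log_two_succ_eq_of_mem_Ico {k n : ℕ} (h : n ∈ Ico (2 ^ k - 1) (2 ^ (k + 1) - 1)) :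
    Nat.log 2 (n + 1) = k := by
  rw [mem_Ico, pow_succ] at h
  have := k.one_le_two_pow
  exact Nat.log_eq_of_pow_le_of_lt_pow (by omega) (by rw [pow_succ]; omega)

theorem sum_range_two_pow_sub_one_log_mul_sub {R : Type*} [CommRing R] (b : ℕ → R) (K : ℕ) :
    ∑ n ∈ range (2 ^ K - 1), ((Nat.log 2 (n + 1) : R) + 1) * (b n - b (n + 1)) =
      ∑ k ∈ range K, b (2 ^ k - 1) - K * b (2 ^ K - 1) := by
  induction K with
  | zero => simp
  | succ K ih =>
    have hle : 2 ^ K - 1 ≤ 2 ^ (K + 1) - 1 :=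
      Nat.sub_le_sub_right (Nat.pow_le_pow_right two_pos K.le_succ) 1
    have hblock : ∑ n ∈ Ico (2 ^ K - 1) (2 ^ (K + 1) - 1),
        ((Nat.log 2 (n + 1) : R) + 1) * (b n - b (n + 1)) =
          (K + 1) * (b (2 ^ K - 1) - b (2 ^ (K + 1) - 1)) := by
      rw [sum_congr rfl fun n hn => by rw [Nat.log_two_succ_eq_of_mem_Ico hn], ← mul_sum,
        ← neg_sub, ← sum_Ico_sub b hle, ← sum_neg_distrib]
      simp only [neg_sub]
    rw [← sum_range_add_sum_Ico _ hle, ih, hblock, sum_range_succ]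
    push_cast
    ring

theorem harmonic_two_mul_succ_sub_sub_succ (n : ℕ) :
    (harmonic (2 * n + 1) - harmonic n) - (harmonic (2 * (n + 1) + 1) - harmonic (n + 1)) =
      1 / (2 * (n + 1) * (2 * (n + 1) + 1)) := by
  rw [show 2 * (n + 1) + 1 = 2 * n + 1 + 1 + 1 by ring, harmonic_succ (2 * n + 1 + 1),
    harmonic_succ (2 * n + 1), harmonic_succ n]
  push_cast
  field_simp
  ring

theorem sum_range_harmonic_two_pow_sub_one (K : ℕ) :
    ∑ k ∈ range K, (harmonic (2 * (2 ^ k - 1) + 1) - harmonic (2 ^ k - 1)) =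
      harmonic (2 ^ K - 1) := by
  have h k : 2 * (2 ^ k - 1) + 1 = 2 ^ (k + 1) - 1 := by
    have := k.one_le_two_pow
    rw [pow_succ]
    omega
  simp only [h, sum_range_sub fun k => harmonic (2 ^ k - 1), pow_zero, Nat.sub_self,
    harmonic_zero, sub_zero]

theorem Nat.cast_two_pow_sub_one_add_one {R : Type*} [Semiring R] (K : ℕ) :
    ((2 ^ K - 1 : ℕ) : R) + 1 = 2 ^ K := by
  rw [← Nat.cast_add_one, Nat.sub_add_cancel K.one_le_two_pow]
  push_cast
  rfl

theorem eulerMascheroniSeq_two_pow_sub_one (K : ℕ) :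
    eulerMascheroniSeq (2 ^ K - 1) = harmonic (2 ^ K - 1) - K * log 2 := by
  rw [eulerMascheroniSeq, Nat.cast_two_pow_sub_one_add_one, Real.log_pow]

theorem eulerMascheroniConstant_sub_inv_le_eulerMascheroniSeq (n : ℕ) :
    eulerMascheroniConstant - (n + 1 : ℝ)⁻¹ ≤ eulerMascheroniSeq n := by
  have h := (eulerMascheroniConstant_lt_eulerMascheroniSeq' (n + 1)).le
  rw [eulerMascheroniSeq', if_neg n.succ_ne_zero, harmonic_succ] at h
  rw [eulerMascheroniSeq]
  push_cast at h ⊢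
  linarith

theorem sum_range_two_pow_sub_one_digitCount (K : ℕ) :
    ∑ n ∈ range (2 ^ K - 1), ((N1 (n + 1) + N0 (n + 1) : ℕ) : ℝ) /
        (2 * ((n : ℝ) + 1) * (2 * ((n : ℝ) + 1) + 1)) =
      (K + 1) * eulerMascheroniSeq (2 ^ K - 1) - K * eulerMascheroniSeq (2 ^ (K + 1) - 1) := by
  set b : ℕ → ℝ := fun m => (harmonic (2 * m + 1) - harmonic m : ℚ)
  have hterm n : ((N1 (n + 1) + N0 (n + 1) : ℕ) : ℝ) /
      (2 * ((n : ℝ) + 1) * (2 * ((n : ℝ) + 1) + 1)) =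
        ((Nat.log 2 (n + 1) : ℝ) + 1) * (b n - b (n + 1)) := by
    simp only [b, ← Rat.cast_sub, harmonic_two_mul_succ_sub_sub_succ, N1_add_N0 n.succ_ne_zero]
    push_cast
    ring
  rw [sum_congr rfl fun n _ => hterm n, sum_range_two_pow_sub_one_log_mul_sub]
  simp only [b, ← Rat.cast_sum, sum_range_harmonic_two_pow_sub_one]
  rw [show 2 * (2 ^ K - 1) + 1 = 2 ^ (K + 1) - 1 by have := K.one_le_two_pow; rw [pow_succ]; omega,
    eulerMascheroniSeq_two_pow_sub_one, eulerMascheroniSeq_two_pow_sub_one]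
  push_cast
  ring

theorem tendsto_succ_mul_eulerMascheroniSeq_two_pow_sub_one :
    Tendsto (fun K : ℕ => (K + 1) * eulerMascheroniSeq (2 ^ K - 1) -
      K * eulerMascheroniSeq (2 ^ (K + 1) - 1)) atTop (𝓝 eulerMascheroniConstant) := by
  have hgap K : 0 ≤ eulerMascheroniConstant - eulerMascheroniSeq (2 ^ K - 1) ∧
      eulerMascheroniConstant - eulerMascheroniSeq (2 ^ K - 1) ≤ 1 / 2 ^ K := by
    have := eulerMascheroniConstant_sub_inv_le_eulerMascheroniSeq (2 ^ K - 1)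
    rw [Nat.cast_two_pow_sub_one_add_one] at this
    exact ⟨sub_nonneg.mpr (eulerMascheroniSeq_lt_eulerMascheroniConstant _).le,
      by rw [one_div]; linarith⟩
  have hrate : Tendsto (fun K : ℕ => ((K : ℝ) + 1) / 2 ^ K) atTop (𝓝 0) := by
    simpa [add_div] using (tendsto_pow_const_div_const_pow_of_one_lt 1 one_lt_two).add
      (tendsto_inv_atTop_zero.comp (tendsto_pow_atTop_atTop_of_one_lt one_lt_two))
  refine tendsto_of_tendsto_of_tendsto_of_le_of_le
    (by simpa using hrate.const_sub eulerMascheroniConstant)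
    (by simpa using hrate.const_add eulerMascheroniConstant)
    (fun K => ?_) (fun K => ?_) <;>
  · obtain ⟨hr₀, hr₁⟩ := hgap K
    obtain ⟨hs₀, hs₁⟩ := hgap (K + 1)
    have hK : (0 : ℝ) ≤ K := K.cast_nonneg
    have hpow : (1 : ℝ) / 2 ^ (K + 1) ≤ 1 / 2 ^ K :=
      one_div_pow_le_one_div_pow_of_le one_le_two K.le_succ
    rw [← mul_one_div ((K : ℝ) + 1)]
    linarith [mul_le_mul_of_nonneg_left hr₁ (by positivity : (0 : ℝ) ≤ K + 1),
      mul_le_mul_of_nonneg_left (hs₁.trans hpow) hK, mul_nonneg hK hs₀, mul_nonneg hK hr₀]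

/-- `γ = ∑_{n=1}^∞ (N₁(n) + N₀(n)) / (2n(2n+1))`. -/
theorem gamma_eq_tsum_digitCount :
    Real.eulerMascheroniConstant = ∑' n : ℕ,
      ((N1 (n + 1) + N0 (n + 1) : ℕ) : ℝ) /
        (2 * ((n : ℝ) + 1) * (2 * ((n : ℝ) + 1) + 1)) := by
  refine (HasSum.tsum_eq ?_).symm
  have hnonneg n : 0 ≤ ((N1 (n + 1) + N0 (n + 1) : ℕ) : ℝ) /
      (2 * ((n : ℝ) + 1) * (2 * ((n : ℝ) + 1) + 1)) := by positivity
  rw [hasSum_iff_tendsto_nat_of_nonneg hnonneg, tendsto_iff_tendsto_subseq_of_monotone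
    (monotone_nat_of_le_succ fun N => by simpa [sum_range_succ] using hnonneg N)
    ((tendsto_sub_atTop_nat 1).comp (tendsto_pow_atTop_atTop_of_one_lt one_lt_two))]
  simpa only [Function.comp_def, sum_range_two_pow_sub_one_digitCount] using
    tendsto_succ_mul_eulerMascheroniSeq_two_pow_sub_one
end

section
/- Euler's constant γ satisfies γ = 1/2 + Σ_{n=1}^∞ ⌊log₃(3n)⌋ · (12n + 6) / (3n(3n+1)(3n+2)(3n+3)). -/
/-!
The general term is `c m = 1/(3m) - 1/(3m+1) - 1/(3m+2) + 1/(3m+3)`, the increment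
`Φ (m+1) - Φ m` of `Φ N = H N - H (3N) - 1/(3N)`. As `⌊log₃ (3m)⌋ = j + 1` on the block
`3^j ≤ m < 3^(j+1)`, summation by parts over these blocks gives
`J Φ(3^J) + H(3^J) - 1/2 - 1/(2·3^J)` for the partial sum over `m < 3^J`. The bound
`|H n - log n - γ| ≤ 1/n` puts this within `O(J 3^(-J))` of `γ - 1/2`, and since the terms are
nonnegative this subsequence of partial sums determines the sum.
-/

open Real Filter Finset Topology

noncomputable def addisonCoeff (n : ℕ) : ℝ :=
  1 / (3 * n) - 1 / (3 * n + 1) - 1 / (3 * n + 2) + 1 / (3 * n + 3)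

lemma addisonCoeff_eq_div {n : ℕ} (hn : n ≠ 0) :
    addisonCoeff n = (12 * n + 6) / (3 * n * (3 * n + 1) * (3 * n + 2) * (3 * n + 3)) := by
  have : (n : ℝ) ≠ 0 := by exact_mod_cast hn
  rw [addisonCoeff]
  field_simp
  ring

lemma addisonCoeff_pos {n : ℕ} (hn : n ≠ 0) : 0 < addisonCoeff n := by
  rw [addisonCoeff_eq_div hn]
  have : (0 : ℝ) < n := by positivity
  positivity

/-- `1 / (3 * 0) = 0` makes `addisonPotential_succ_sub` hold at `n = 0` as well. -/
noncomputable def addisonPotential (n : ℕ) : ℝ := harmonic n - harmonic (3 * n) - 1 / (3 * n)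

lemma addisonPotential_succ_sub (n : ℕ) :
    addisonPotential (n + 1) - addisonPotential n = addisonCoeff n := by
  simp only [addisonPotential, addisonCoeff, show 3 * (n + 1) = 3 * n + 1 + 1 + 1 by ring,
    harmonic_succ]
  push_cast
  field_simp
  ring

lemma sum_Ico_addisonCoeff {m n : ℕ} (hmn : m ≤ n) :
    ∑ k ∈ Ico m n, addisonCoeff k = addisonPotential n - addisonPotential m := by
  simp only [← addisonPotential_succ_sub, Finset.sum_Ico_sub _ hmn]

lemma natLog_three_mul_of_mem_Ico {j m : ℕ} (hm : m ∈ Ico (3 ^ j) (3 ^ (j + 1))) :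
    Nat.log 3 (3 * m) = j + 1 := by
  rw [mem_Ico] at hm
  apply Nat.log_eq_of_pow_le_of_lt_pow <;> rw [pow_succ'] <;> omega

lemma sum_natLog_mul_addisonCoeff (J : ℕ) :
    ∑ m ∈ range (3 ^ J), (Nat.log 3 (3 * m) : ℝ) * addisonCoeff m =
      J * addisonPotential (3 ^ J) + harmonic (3 ^ J) - 1 / 2 - 1 / (2 * 3 ^ J) := by
  induction J with
  | zero => norm_num [addisonPotential]
  | succ J ih =>
    have hle : 3 ^ J ≤ 3 ^ (J + 1) := Nat.pow_le_pow_right (by norm_num) J.le_succ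
    have hblock : ∑ m ∈ Ico (3 ^ J) (3 ^ (J + 1)), (Nat.log 3 (3 * m) : ℝ) * addisonCoeff m =
        (J + 1) * (addisonPotential (3 ^ (J + 1)) - addisonPotential (3 ^ J)) := by
      rw [← sum_Ico_addisonCoeff hle, mul_sum]
      refine sum_congr rfl fun m hm => ?_
      rw [natLog_three_mul_of_mem_Ico hm]
      push_cast
      ring
    rw [← sum_range_add_sum_Ico _ hle, ih, hblock, addisonPotential, pow_succ']
    push_cast
    field_simp
    ring

lemma abs_harmonic_sub_log_sub_eulerMascheroniConstant_le {n : ℕ} (hn : n ≠ 0) :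
    |harmonic n - log n - eulerMascheroniConstant| ≤ 1 / n := by
  have hpos : (0 : ℝ) < n := by positivity
  have hupper := eulerMascheroniSeq_lt_eulerMascheroniConstant n
  have hlower := eulerMascheroniConstant_lt_eulerMascheroniSeq' n
  rw [eulerMascheroniSeq] at hupper
  rw [eulerMascheroniSeq', if_neg hn] at hlower
  have hlog : log (n + 1) - log n ≤ 1 / n := by
    rw [← log_div (by positivity) hpos.ne']
    calc log ((n + 1) / n) ≤ (n + 1) / n - 1 := log_le_sub_one_of_pos (by positivity)
      _ = 1 / n := by field_simp; ring
  rw [abs_le]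
  constructor <;> linarith

lemma abs_harmonic_three_pow_sub_le (J : ℕ) :
    |harmonic (3 ^ J) - J * log 3 - eulerMascheroniConstant| ≤ 1 / 3 ^ J := by
  simpa [log_pow] using
    abs_harmonic_sub_log_sub_eulerMascheroniConstant_le (n := 3 ^ J) (by positivity)

lemma abs_sum_natLog_mul_addisonCoeff_sub_le (J : ℕ) :
    |∑ m ∈ range (3 ^ J), (Nat.log 3 (3 * m) : ℝ) * addisonCoeff m -
        (eulerMascheroniConstant - 1 / 2)| ≤ 2 * (J + 1) * (1 / 3 ^ J) := by
  have hu := abs_le.mp (abs_harmonic_three_pow_sub_le J)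
  have hv := abs_le.mp (abs_harmonic_three_pow_sub_le (J + 1))
  have h3 : (1 : ℝ) / (3 * 3 ^ J) = 1 / 3 ^ J / 3 := by field_simp
  have h2 : (1 : ℝ) / (2 * 3 ^ J) = 1 / 3 ^ J / 2 := by field_simp
  have hpos : (0 : ℝ) < 1 / 3 ^ J := by positivity
  simp only [pow_succ', h3] at hv
  rw [sum_natLog_mul_addisonCoeff, addisonPotential, h2, abs_le]
  push_cast at hv ⊢
  rw [h3]
  generalize (1 : ℝ) / 3 ^ J = t at *
  have hJ : (0 : ℝ) ≤ J := J.cast_nonneg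
  constructor <;> linarith [mul_le_mul_of_nonneg_left hu.1 hJ, mul_le_mul_of_nonneg_left hu.2 hJ,
    mul_le_mul_of_nonneg_left hv.1 hJ, mul_le_mul_of_nonneg_left hv.2 hJ]

lemma tendsto_sum_natLog_mul_addisonCoeff :
    Tendsto (fun J => ∑ m ∈ range (3 ^ J), (Nat.log 3 (3 * m) : ℝ) * addisonCoeff m) atTop
      (𝓝 (eulerMascheroniConstant - 1 / 2)) := by
  have hgeom : Tendsto (fun J : ℕ => 2 * (J + 1) * (1 / 3 ^ J : ℝ)) atTop (𝓝 0) := by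
    have hr : (0 : ℝ) ≤ 1 / 3 := by norm_num
    have hr' : (1 / 3 : ℝ) < 1 := by norm_num
    have h := ((tendsto_self_mul_const_pow_of_lt_one hr hr').add
      (tendsto_pow_atTop_nhds_zero_of_lt_one hr hr')).const_mul 2
    convert h using 1
    · ext J
      rw [one_div_pow]
      ring
    · simp
  exact tendsto_iff_norm_sub_tendsto_zero.mpr
    (squeeze_zero (fun _ => norm_nonneg _) abs_sum_natLog_mul_addisonCoeff_sub_le hgeom)

lemma hasSum_natLog_mul_addisonCoeff :
    HasSum (fun m => (Nat.log 3 (3 * m) : ℝ) * addisonCoeff m)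
      (eulerMascheroniConstant - 1 / 2) := by
  have hnonneg (m : ℕ) : 0 ≤ (Nat.log 3 (3 * m) : ℝ) * addisonCoeff m := by
    rcases eq_or_ne m 0 with rfl | hm
    · simp
    · exact mul_nonneg (Nat.cast_nonneg _) (addisonCoeff_pos hm).le
  rw [hasSum_iff_tendsto_nat_of_nonneg hnonneg]
  refine (tendsto_iff_tendsto_subseq_of_monotone
    (fun _ _ h => sum_le_sum_of_subset_of_nonneg (range_mono h) fun i _ _ => hnonneg i)
    (tendsto_pow_atTop_atTop_of_one_lt (by norm_num : 1 < 3))).mpr ?_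
  exact tendsto_sum_natLog_mul_addisonCoeff

lemma floor_log_div_log_natCast (b n : ℕ) : ⌊log n / log b⌋ = Nat.log b n := by
  rw [log_div_log, floor_logb_natCast n.cast_nonneg, Int.log_natCast]

/-- `γ = 1/2 + ∑_{n=1}^∞ ⌊log₃(3n)⌋ (12n+6) / (3n(3n+1)(3n+2)(3n+3))`. -/
theorem gamma_eq_base_three_addison_series :
    Real.eulerMascheroniConstant = 1 / 2 + ∑' n : ℕ,
      (⌊Real.log (3 * ((n : ℝ) + 1)) / Real.log 3⌋ : ℝ) * (12 * ((n : ℝ) + 1) + 6) /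
        (3 * ((n : ℝ) + 1) * (3 * ((n : ℝ) + 1) + 1) * (3 * ((n : ℝ) + 1) + 2) *
          (3 * ((n : ℝ) + 1) + 3)) := by
  have hterm (n : ℕ) :
      (⌊log (3 * ((n : ℝ) + 1)) / log 3⌋ : ℝ) * (12 * ((n : ℝ) + 1) + 6) /
          (3 * ((n : ℝ) + 1) * (3 * ((n : ℝ) + 1) + 1) * (3 * ((n : ℝ) + 1) + 2) *
            (3 * ((n : ℝ) + 1) + 3)) =
        (Nat.log 3 (3 * (n + 1)) : ℝ) * addisonCoeff (n + 1) := by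
    have h := floor_log_div_log_natCast 3 (3 * (n + 1))
    push_cast at h
    rw [h, addisonCoeff_eq_div n.succ_ne_zero, mul_div_assoc]
    push_cast
    ring
  -- the `m = 0` term vanishes since `Nat.log 3 0 = 0`
  have hsum := (hasSum_nat_add_iff' 1).mpr hasSum_natLog_mul_addisonCoeff
  simp only [sum_range_one, mul_zero, Nat.log_zero_right, Nat.cast_zero, zero_mul, sub_zero] at hsum
  rw [tsum_congr hterm, hsum.tsum_eq]
  ring
end

section
/- Let A_n = 1/n − ln((n+1)/n) and Δ⁻(n) = N₁(n) − N₀(n), where N₁(n) and N₀(n) count the ones and zeros in the binary expansion of n. Then for every positive integer k, Σ_{n=1}^{2^k−1} (−1)^{n−1} A_n = Σ_{n=1}^{2^k−1} Δ⁻(n)/(2n(2n+1)) + Σ_{n=2^{k−1}}^{2^k−1} Δ⁻(n) A_n. -/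
open Real

/-- `A n = 1/n - ln((n+1)/n)`. -/
noncomputable def A (n : ℕ) : ℝ := 1 / (n : ℝ) - Real.log (((n : ℝ) + 1) / (n : ℝ))

/-!
Pair each `n ∈ [2^(k+1), 2^(k+2))` with its sibling: `n = 2m` and `n = 2m + 1`. Appending a binary
digit shifts `Δ⁻` by `∓1`, and `A (2m) + A (2m+1) = A m - 1/(2m(2m+1))` because the two logarithms
telescope to `log((m+1)/m)`. Hence the dyadic block of `Δ⁻ n · A n` at level `k + 1` equals the
alternating block at that level plus the block of `Δ⁻ m · A m - Δ⁻ m/(2m(2m+1))` at level `k`, and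
the identity follows by induction on `k`.
-/

open Finset

theorem Finset.sum_Ico_two_mul {M : Type*} [AddCommMonoid M] (f : ℕ → M) (a b : ℕ) :
    ∑ n ∈ Ico (2 * a) (2 * b), f n = ∑ m ∈ Ico a b, (f (2 * m) + f (2 * m + 1)) := by
  induction b with
  | zero => simp
  | succ b ih =>
    rcases lt_or_ge b a with hba | hab
    · rw [Ico_eq_empty (by omega), Ico_eq_empty (by omega), sum_empty, sum_empty]
    · rw [show 2 * (b + 1) = 2 * b + 1 + 1 by ring, sum_Ico_succ_top (by omega),
        sum_Ico_succ_top (by omega), sum_Ico_succ_top hab, ih, add_assoc]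

/-- The paper's `Δ⁻(n)`. -/
noncomputable def digitBalance (n : ℕ) : ℝ := N1 n - N0 n

theorem digitBalance_two_mul {n : ℕ} (hn : n ≠ 0) :
    digitBalance (2 * n) = digitBalance n - 1 := by
  have h := Nat.digits_add 2 one_lt_two 0 n two_pos (.inr hn)
  rw [zero_add] at h
  simp only [digitBalance, N1, N0, h, List.count_cons_self, List.count_cons_of_ne zero_ne_one]
  push_cast
  ring

theorem digitBalance_two_mul_add_one (n : ℕ) :
    digitBalance (2 * n + 1) = digitBalance n + 1 := by
  have h := Nat.digits_add 2 one_lt_two 1 n one_lt_two (.inl one_ne_zero)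
  rw [add_comm] at h
  simp only [digitBalance, N1, N0, h, List.count_cons_self, List.count_cons_of_ne one_ne_zero]
  push_cast
  ring

theorem A_two_mul_add_A_two_mul_add_one {m : ℕ} (hm : m ≠ 0) :
    A (2 * m) + A (2 * m + 1) = A m - 1 / (2 * m * (2 * m + 1)) := by
  have hm' : (0 : ℝ) < m := by positivity
  have hlog : Real.log ((2 * m + 1) / (2 * m)) + Real.log ((2 * m + 1 + 1) / (2 * m + 1)) =
      Real.log ((m + 1) / m) := by
    rw [← Real.log_mul (by positivity) (by positivity)]
    congr 1
    field_simp
    ring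
  simp only [A]
  push_cast
  rw [← hlog]
  field_simp
  ring

theorem alternating_pair_eq {m : ℕ} (hm : m ≠ 0) :
    (-1 : ℝ) ^ (2 * m - 1) * A (2 * m) + (-1 : ℝ) ^ (2 * m + 1 - 1) * A (2 * m + 1) =
      digitBalance (2 * m) * A (2 * m) + digitBalance (2 * m + 1) * A (2 * m + 1) +
        (digitBalance m / (2 * m * (2 * m + 1)) - digitBalance m * A m) := by
  have hodd : Odd (2 * m - 1) := ⟨m - 1, by omega⟩
  rw [hodd.neg_one_pow, Nat.add_sub_cancel, (even_two_mul m).neg_one_pow,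
    digitBalance_two_mul hm, digitBalance_two_mul_add_one]
  linear_combination (-digitBalance m) * A_two_mul_add_A_two_mul_add_one hm

theorem sum_alternating_dyadic_block (k : ℕ) :
    ∑ n ∈ Ico (2 ^ (k + 1)) (2 ^ (k + 2)), (-1 : ℝ) ^ (n - 1) * A n =
      ∑ n ∈ Ico (2 ^ (k + 1)) (2 ^ (k + 2)), digitBalance n * A n +
        ∑ n ∈ Ico (2 ^ k) (2 ^ (k + 1)),
          (digitBalance n / (2 * n * (2 * n + 1)) - digitBalance n * A n) := by
  rw [pow_succ' 2 (k + 1), pow_succ' 2 k, sum_Ico_two_mul, sum_Ico_two_mul, ← sum_add_distrib]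
  refine sum_congr rfl fun m hm => ?_
  push_cast
  exact alternating_pair_eq
    (Nat.one_le_iff_ne_zero.1 (Nat.one_le_two_pow.trans (mem_Ico.1 hm).1))

theorem sum_alternating_A_eq (k : ℕ) :
    ∑ n ∈ Ico 1 (2 ^ (k + 1)), (-1 : ℝ) ^ (n - 1) * A n =
      ∑ n ∈ Ico 1 (2 ^ k), digitBalance n / (2 * n * (2 * n + 1)) +
        ∑ n ∈ Ico (2 ^ k) (2 ^ (k + 1)), digitBalance n * A n := by
  induction k with
  | zero => simp [digitBalance, N1, N0]
  | succ k ih =>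
    have h1 : 1 ≤ 2 ^ k := Nat.one_le_two_pow
    have h2 : 2 ^ k ≤ 2 ^ (k + 1) := Nat.pow_le_pow_right two_pos k.le_succ
    have h3 : 2 ^ (k + 1) ≤ 2 ^ (k + 2) := Nat.pow_le_pow_right two_pos (k + 1).le_succ
    rw [← sum_Ico_consecutive _ (h1.trans h2) h3, ih, sum_alternating_dyadic_block,
      ← sum_Ico_consecutive _ h1 h2, sum_sub_distrib]
    ring

theorem partial_sum_identity_minus_general (k : ℕ) :
    ∑ n ∈ Finset.Icc 1 (2 ^ k - 1), (-1 : ℝ) ^ (n - 1) * A n =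
      ∑ n ∈ Finset.Icc 1 (2 ^ (k - 1) - 1),
        ((N1 n : ℝ) - (N0 n : ℝ)) / (2 * (n : ℝ) * (2 * (n : ℝ) + 1)) +
      ∑ n ∈ Finset.Icc (2 ^ (k - 1)) (2 ^ k - 1), ((N1 n : ℝ) - (N0 n : ℝ)) * A n := by
  cases k with
  | zero => simp
  | succ k =>
    have hIcc (a j : ℕ) : Icc a (2 ^ j - 1) = Ico a (2 ^ j) :=
      Icc_sub_one_right_eq_Ico_of_not_isMin (by simp) a
    simp only [hIcc, Nat.add_sub_cancel]
    exact sum_alternating_A_eq k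

/-- Partial-sum identity for the series `∑ (-1)^{n-1} A_n` in terms of
`Δ⁻(n) = N₁(n) - N₀(n)`. -/
theorem partial_sum_identity_minus (k : ℕ) (hk : 1 ≤ k) :
    ∑ n ∈ Finset.Icc 1 (2 ^ k - 1), (-1 : ℝ) ^ (n - 1) * A n =
      ∑ n ∈ Finset.Icc 1 (2 ^ (k - 1) - 1),
        ((N1 n : ℝ) - (N0 n : ℝ)) / (2 * (n : ℝ) * (2 * (n : ℝ) + 1)) +
      ∑ n ∈ Finset.Icc (2 ^ (k - 1)) (2 ^ k - 1), ((N1 n : ℝ) - (N0 n : ℝ)) * A n :=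
  partial_sum_identity_minus_general k
end

section
/- Let q be an integer with q ≥ 2 and define ε(n) = q − 1 if q divides n and ε(n) = −1 otherwise. Then Euler's constant γ satisfies the generalized Vacca series γ = Σ_{n=1}^∞ ε(n) ⌊log_q n⌋ / n, where the series converges. -/
/-!
Put `T(N) = H(⌊N/q⌋) - H(N)`, `H` the harmonic numbers. Then `T(N) - T(N-1) = ε(N)/N`, and
`k(N) = ⌊log_q N⌋` only jumps at `N = q^(k+1)`, where `T(N) = H(q^k - 1) - H(q^(k+1) - 1)`; so
summation by parts gives `∑_{n ≤ N} ε(n) k(n)/n = k(N) T(N) + H(q^k(N) - 1)`. By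
`H(n) = log n + γ + O(1/n)`, the first term is `-k(N) log q + O(k(N) q^(1-k(N)))` and the second
is `k(N) log q + γ + o(1)`.
-/

open Real Filter Finset Topology

noncomputable def vaccaCoeff (q n : ℕ) : ℝ := if q ∣ n then (q : ℝ) - 1 else -1

theorem Nat.pow_succ_sub_one_div {b : ℕ} (hb : 0 < b) (k : ℕ) :
    (b ^ (k + 1) - 1) / b = b ^ k - 1 := by
  have hpos : 0 < b ^ k := by positivity
  have hle : b ≤ b ^ k * b := Nat.le_mul_of_pos_left b hpos
  rw [pow_succ]
  apply Nat.div_eq_of_lt_le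
  · rw [Nat.sub_mul, one_mul]; omega
  · rw [Nat.sub_add_cancel hpos]; omega

theorem Nat.pow_log_le_mul_div {b n : ℕ} (hb : 1 < b) (hn : b ≤ n) :
    b ^ Nat.log b n ≤ b * (n / b) := by
  obtain ⟨j, hj⟩ : ∃ j, Nat.log b n = j + 1 :=
    ⟨Nat.log b n - 1, by have := Nat.log_pos hb hn; omega⟩
  rw [hj, pow_succ']
  refine Nat.mul_le_mul_left b ((Nat.le_div_iff_mul_le (by omega)).mpr ?_)
  rw [← pow_succ, ← hj]
  exact Nat.pow_log_le_self b (by omega)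

theorem Nat.tendsto_log_atTop {b : ℕ} (hb : 1 < b) : Tendsto (Nat.log b) atTop atTop :=
  tendsto_atTop_atTop_of_monotone Nat.log_monotone fun k ↦ ⟨b ^ k, (Nat.log_pow hb k).ge⟩

theorem harmonic_div_sub_harmonic_succ {q : ℕ} (hq : 0 < q) (n : ℕ) :
    ((harmonic ((n + 1) / q) : ℝ) - harmonic (n + 1)) - (harmonic (n / q) - harmonic n) =
      vaccaCoeff q (n + 1) / (n + 1) := by
  rw [Nat.succ_div, vaccaCoeff]
  split_ifs with hdvd
  · obtain ⟨m, hm⟩ := hdvd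
    have hm' : n / q + 1 = m := by
      rw [← Nat.mul_div_cancel_left m hq, ← hm, Nat.succ_div, if_pos ⟨m, hm⟩]
    subst hm'
    have hmR : (n : ℝ) + 1 = q * ((n / q : ℕ) + 1) := by exact_mod_cast hm
    simp only [harmonic_succ]
    push_cast
    rw [hmR]
    field_simp
    ring
  · rw [add_zero, harmonic_succ]
    push_cast
    ring

theorem sum_vaccaCoeff_mul_log_div {q : ℕ} (hq : 1 < q) (N : ℕ) :
    ∑ n ∈ Icc 1 N, vaccaCoeff q n * Nat.log q n / n =
      Nat.log q N * ((harmonic (N / q) : ℝ) - harmonic N) + harmonic (q ^ Nat.log q N - 1) := by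
  induction N with
  | zero => simp
  | succ N ih =>
    have hstep := harmonic_div_sub_harmonic_succ (by omega : 0 < q) N
    rw [sum_Icc_succ_top (by omega), ih]
    push_cast
    obtain ⟨k, hk⟩ : ∃ k, Nat.log q N = k := ⟨_, rfl⟩
    have hlt : N + 1 ≤ q ^ (k + 1) := hk ▸ Nat.lt_pow_succ_log_self hq N
    rcases hlt.lt_or_eq with hlt | heq
    · have hk' : Nat.log q (N + 1) = k :=
        Nat.log_eq_of_pow_le_of_lt_pow (hk ▸ Nat.pow_log_le_add_one q N) hlt
      rw [hk, hk']
      linear_combination -(k : ℝ) * hstep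
    · have hk' : Nat.log q (N + 1) = k + 1 := by rw [heq, Nat.log_pow hq]
      have hN : N = q ^ (k + 1) - 1 := by omega
      have hT : (harmonic (N / q) : ℝ) = harmonic (q ^ k - 1) := by
        rw [hN, Nat.pow_succ_sub_one_div (by omega)]
      rw [hk, hk', ← heq, add_tsub_cancel_right]
      push_cast
      linear_combination -((k : ℝ) + 1) * hstep - hT

theorem Real.log_sub_log_le_div {x y : ℝ} (hx : 0 < x) (hy : 0 < y) :
    log y - log x ≤ (y - x) / x := by
  rw [← log_div hy.ne' hx.ne', sub_div, div_self hx.ne']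
  exact log_le_sub_one_of_pos (div_pos hy hx)

theorem eulerMascheroniConstant_le_harmonic_sub_log {n : ℕ} (hn : n ≠ 0) :
    eulerMascheroniConstant ≤ harmonic n - log n := by
  simpa [eulerMascheroniSeq', hn] using (eulerMascheroniConstant_lt_eulerMascheroniSeq' n).le

theorem harmonic_sub_log_le_eulerMascheroniConstant_add {n : ℕ} (hn : n ≠ 0) :
    harmonic n - log n ≤ eulerMascheroniConstant + 1 / n := by
  have hγ := (eulerMascheroniSeq_lt_eulerMascheroniConstant n).le
  have hlog := log_sub_log_le_div (Nat.cast_pos.mpr (Nat.pos_of_ne_zero hn))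
    (by positivity : (0 : ℝ) < n + 1)
  rw [eulerMascheroniSeq] at hγ
  rw [add_sub_cancel_left] at hlog
  linarith

theorem abs_harmonic_sub_log_sub_harmonic_sub_log_le {m n : ℕ} (hm : m ≠ 0) (hmn : m ≤ n) :
    |((harmonic n : ℝ) - log n) - (harmonic m - log m)| ≤ 1 / m := by
  have hn : n ≠ 0 := by omega
  have hnm : 1 / (n : ℝ) ≤ 1 / m :=
    one_div_le_one_div_of_le (by positivity) (by exact_mod_cast hmn)
  have hm_lower := eulerMascheroniConstant_le_harmonic_sub_log hm
  have hn_lower := eulerMascheroniConstant_le_harmonic_sub_log hn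
  have hm_upper := harmonic_sub_log_le_eulerMascheroniConstant_add hm
  have hn_upper := harmonic_sub_log_le_eulerMascheroniConstant_add hn
  rw [abs_le]
  constructor <;> linarith

theorem abs_harmonic_div_sub_harmonic_add_log_le {q N : ℕ} (hM : 0 < N / q) :
    |(harmonic (N / q) : ℝ) - harmonic N + log q| ≤ 2 / (N / q : ℕ) := by
  have hq : 0 < q := Nat.pos_of_ne_zero fun h ↦ by simp [h] at hM
  set M := N / q
  have hMR : (0 : ℝ) < M := by exact_mod_cast hM
  have hqMR : (q : ℝ) * M ≤ N := by exact_mod_cast Nat.mul_div_le N q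
  have hNR : (N : ℝ) < q * M + q := by
    have := Nat.lt_mul_div_succ N hq
    exact_mod_cast (mul_add_one q M) ▸ this
  have hlog_mul : log ((q : ℝ) * M) = log q + log M := log_mul (by positivity) hMR.ne'
  have hlog_lower : log ((q : ℝ) * M) ≤ log N := log_le_log (by positivity) hqMR
  have hlog_upper : log N - log ((q : ℝ) * M) ≤ 1 / M := by
    have hN0 : (0 : ℝ) < N := (by positivity : (0 : ℝ) < q * M).trans_le hqMR
    refine (log_sub_log_le_div (by positivity) hN0).trans ?_
    rw [div_le_div_iff₀ (by positivity) hMR]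
    nlinarith
  have hharmonic := abs_harmonic_sub_log_sub_harmonic_sub_log_le hM.ne' (Nat.div_le_self N q)
  rw [abs_le] at hharmonic ⊢
  constructor <;> linarith [hharmonic.1, hharmonic.2, show 2 / (M : ℝ) = 1 / M + 1 / M by ring]

theorem tendsto_log_mul_harmonic_div_sub_harmonic_add_log {q : ℕ} (hq : 1 < q) :
    Tendsto (fun N : ℕ ↦ (Nat.log q N : ℝ) * ((harmonic (N / q) : ℝ) - harmonic N + log q))
      atTop (𝓝 0) := by
  have hqR : (1 : ℝ) < q := by exact_mod_cast hq
  have hbound : Tendsto (fun N : ℕ ↦ 2 * q * ((Nat.log q N : ℝ) / (q : ℝ) ^ Nat.log q N))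
      atTop (𝓝 0) := by
    simpa using ((tendsto_pow_const_div_const_pow_of_one_lt 1 hqR).comp
      (Nat.tendsto_log_atTop hq)).const_mul (2 * q : ℝ)
  refine squeeze_zero_norm' ?_ hbound
  filter_upwards [eventually_ge_atTop q] with N hN
  have hM : 0 < N / q := Nat.div_pos hN (by omega)
  have hpow : (q : ℝ) ^ Nat.log q N ≤ q * (N / q : ℕ) := by
    exact_mod_cast Nat.pow_log_le_mul_div hq hN
  have hM_inv : 2 / ((N / q : ℕ) : ℝ) ≤ 2 * q / (q : ℝ) ^ Nat.log q N := by
    rw [div_le_div_iff₀ (by positivity) (by positivity)]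
    linarith
  rw [norm_mul, Real.norm_natCast, Real.norm_eq_abs]
  calc (Nat.log q N : ℝ) * |(harmonic (N / q) : ℝ) - harmonic N + log q|
      ≤ Nat.log q N * (2 / (N / q : ℕ)) :=
        mul_le_mul_of_nonneg_left (abs_harmonic_div_sub_harmonic_add_log_le hM)
          (by positivity)
    _ ≤ Nat.log q N * (2 * q / (q : ℝ) ^ Nat.log q N) := by gcongr
    _ = 2 * q * ((Nat.log q N : ℝ) / (q : ℝ) ^ Nat.log q N) := by ring

theorem tendsto_harmonic_pow_sub_one_sub_mul_log {q : ℕ} (hq : 1 < q) :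
    Tendsto (fun k : ℕ ↦ (harmonic (q ^ k - 1) : ℝ) - k * log q) atTop
      (𝓝 eulerMascheroniConstant) := by
  have hpow : Tendsto (fun k : ℕ ↦ q ^ k) atTop atTop := tendsto_pow_atTop_atTop_of_one_lt hq
  have h := (tendsto_harmonic_sub_log.comp hpow).sub
    (tendsto_inv_atTop_zero.comp (tendsto_natCast_atTop_atTop.comp hpow))
  rw [sub_zero] at h
  refine h.congr fun k ↦ ?_
  have hharmonic := harmonic_succ (q ^ k - 1)
  rw [Nat.sub_add_cancel (Nat.one_le_pow _ _ (by omega))] at hharmonic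
  simp only [Function.comp_apply, hharmonic]
  push_cast
  rw [log_pow]
  ring

/-- Generalized Vacca series: `γ = ∑_{n=1}^∞ ε(n) ⌊log_q n⌋ / n`, where `ε(n) = q - 1`
if `q ∣ n` and `ε(n) = -1` otherwise. -/
theorem gamma_eq_generalized_vacca_series (q : ℕ) (hq : 2 ≤ q) :
    Tendsto (fun N : ℕ => ∑ n ∈ Finset.Icc 1 N,
        (if q ∣ n then (q : ℝ) - 1 else -1) * (⌊Real.log n / Real.log q⌋ : ℝ) / n)
      atTop (nhds Real.eulerMascheroniConstant) := by
  have hq1 : 1 < q := hq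
  have hfloor (n : ℕ) : (⌊log n / log q⌋ : ℝ) = Nat.log q n := by
    rw [← logb, floor_logb_natCast (Nat.cast_nonneg n), Int.log_natCast, Int.cast_natCast]
  have h := (tendsto_log_mul_harmonic_div_sub_harmonic_add_log hq1).add
    ((tendsto_harmonic_pow_sub_one_sub_mul_log hq1).comp (Nat.tendsto_log_atTop hq1))
  rw [zero_add] at h
  refine h.congr fun N ↦ ?_
  change _ = ∑ n ∈ Icc 1 N, vaccaCoeff q n * (⌊log n / log q⌋ : ℝ) / n
  simp only [hfloor, sum_vaccaCoeff_mul_log_div hq1, Function.comp_apply]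
  ring
end
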